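/- Suppose the implicit scheme g_{ij} = 0 is monotone and the discrete maximum principle holds. If {U^n} and {V^n} both satisfy the nonlinear difference equation δ_t W^{n+1} − sup_{σ₁²}(σ₁²/2)δ_x²W^{n+1} − sup_{σ₂²}(σ₂²/2)δ_y²W^{n+1} − max(b̄ δ⁺_{xy}W^{n+1}, b̲ δ⁻_{xy}W^{n+1}) = 0 at interior nodes, with U⁰_{ij} ≥ V⁰_{ij} at all nodes and U^{n+1} ≥ V^{n+1} on the spatial boundary for all n, then U^n_{ij} ≥ V^n_{ij} at every grid point and time step. -/
import Mathlib


/-- The nonlinear implicit scheme operator on the grid: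
δ_t W^{n+1} − sup_{σ₁²}(σ₁²/2)δ_x²W^{n+1} − sup_{σ₂²}(σ₂²/2)δ_y²W^{n+1}
− max(b̄ δ⁺_{xy}W^{n+1}, b̲ δ⁻_{xy}W^{n+1}) at node (i,j). -/
noncomputable def gridScheme (a1 b1 a2 b2 bl bu Δt h : ℝ)
    (Un Up : ℤ → ℤ → ℝ) (i j : ℤ) : ℝ :=
  (Un i j - Up i j) / Δt
    - sSup ((fun s => s / 2 *
        ((Un (i + 1) j - 2 * Un i j + Un (i - 1) j) / h ^ 2)) '' Set.Icc a1 b1)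
    - sSup ((fun s => s / 2 *
        ((Un i (j + 1) - 2 * Un i j + Un i (j - 1)) / h ^ 2)) '' Set.Icc a2 b2)
    - max (bu * ((Un (i + 1) (j + 1) + 2 * Un i j + Un (i - 1) (j - 1)
          - Un (i + 1) j - Un (i - 1) j - Un i (j + 1) - Un i (j - 1))
          / (2 * h ^ 2)))
        (bl * ((Un (i + 1) j + Un (i - 1) j + Un i (j + 1) + Un i (j - 1)
          - Un (i + 1) (j - 1) - 2 * Un i j - Un (i - 1) (j + 1))
          / (2 * h ^ 2)))

set_option maxHeartbeats 2000000

lemma ssup_linear (a b d : ℝ) (hab : a ≤ b) :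
    sSup ((fun s => s / 2 * d) '' Set.Icc a b) = max (a / 2 * d) (b / 2 * d) := by
  apply IsGreatest.csSup_eq
  constructor
  · rcases le_total 0 d with hd | hd
    · have h : max (a / 2 * d) (b / 2 * d) = b / 2 * d := max_eq_right (by nlinarith)
      rw [h]; exact ⟨b, Set.right_mem_Icc.2 hab, rfl⟩
    · have h : max (a / 2 * d) (b / 2 * d) = a / 2 * d := max_eq_left (by nlinarith)
      rw [h]; exact ⟨a, Set.left_mem_Icc.2 hab, rfl⟩
  · rintro x ⟨s, hs, rfl⟩
    rcases le_total 0 d with hd | hd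
    · exact le_max_of_le_right (by nlinarith [hs.1, hs.2])
    · exact le_max_of_le_left (by nlinarith [hs.1, hs.2])


lemma min_le_max_sub_max (a b a' b' : ℝ) :
    min (a - a') (b - b') ≤ max a b - max a' b' := by
  rcases max_choice a' b' with h | h <;> rw [h]
  · have h1 := le_max_left a b; have h2 := min_le_left (a - a') (b - b'); linarith
  · have h1 := le_max_right a b; have h2 := min_le_right (a - a') (b - b'); linarith

lemma lower_sup (a b x y : ℝ) (hab : a ≤ b) (hxy : 0 ≤ x - y) :
    a / 2 * (x - y) ≤ max (a / 2 * x) (b / 2 * x) - max (a / 2 * y) (b / 2 * y) := by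
  refine le_trans (le_min (by linarith) (by nlinarith)) (min_le_max_sub_max _ _ _ _)

lemma lower_cross (bu bl p q p' q' : ℝ) :
    min (bu * (p - p')) (bl * (q - q')) ≤ max (bu * p) (bl * q) - max (bu * p') (bl * q') := by
  have h := min_le_max_sub_max (bu * p) (bl * q) (bu * p') (bl * q')
  rw [mul_sub, mul_sub]; exact h

lemma interior_key (a1 b1 a2 b2 bl bu Δt h : ℝ)
    (uc ue uw un us une usw use unw uo
     vc ve vw vn vs vne vsw vse vnw vo : ℝ)
    (hΔt : 0 < Δt) (hh : 0 < h)
    (ha1 : 0 < a1) (h1 : a1 ≤ b1) (ha2 : 0 < a2) (h2 : a2 ≤ b2)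
    (hbl : bl < 0) (hbu : 0 < bu)
    (d1 : bu ≤ a1) (d2 : bu ≤ a2) (d3 : -bl ≤ a1) (d4 : -bl ≤ a2)
    (hold : vo ≤ uo)
    (mE : uc - vc ≤ ue - ve) (mW : uc - vc ≤ uw - vw)
    (mN : uc - vc ≤ un - vn) (mS : uc - vc ≤ us - vs)
    (mNE : uc - vc ≤ une - vne) (mSW : uc - vc ≤ usw - vsw)
    (mSE : uc - vc ≤ use - vse) (mNW : uc - vc ≤ unw - vnw)
    (eU : (uc - uo) / Δt
        - max (a1 / 2 * ((ue - 2 * uc + uw) / h ^ 2)) (b1 / 2 * ((ue - 2 * uc + uw) / h ^ 2))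
        - max (a2 / 2 * ((un - 2 * uc + us) / h ^ 2)) (b2 / 2 * ((un - 2 * uc + us) / h ^ 2))
        - max (bu * ((une + 2 * uc + usw - ue - uw - un - us) / (2 * h ^ 2)))
              (bl * ((ue + uw + un + us - use - 2 * uc - unw) / (2 * h ^ 2))) = 0)
    (eV : (vc - vo) / Δt
        - max (a1 / 2 * ((ve - 2 * vc + vw) / h ^ 2)) (b1 / 2 * ((ve - 2 * vc + vw) / h ^ 2))
        - max (a2 / 2 * ((vn - 2 * vc + vs) / h ^ 2)) (b2 / 2 * ((vn - 2 * vc + vs) / h ^ 2))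
        - max (bu * ((vne + 2 * vc + vsw - ve - vw - vn - vs) / (2 * h ^ 2)))
              (bl * ((ve + vw + vn + vs - vse - 2 * vc - vnw) / (2 * h ^ 2))) = 0) :
    vc ≤ uc := by
  have hh2 : (0:ℝ) < h ^ 2 := by positivity
  have hne : h ^ 2 ≠ 0 := ne_of_gt hh2
  have hΔX : 0 ≤ (ue - 2 * uc + uw) / h ^ 2 - (ve - 2 * vc + vw) / h ^ 2 := by
    have hrw : (ue - 2 * uc + uw) / h ^ 2 - (ve - 2 * vc + vw) / h ^ 2
        = ((ue - ve - (uc - vc)) + (uw - vw - (uc - vc))) / h ^ 2 := by ring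
    rw [hrw]; apply div_nonneg _ (le_of_lt hh2); linarith
  have hΔY : 0 ≤ (un - 2 * uc + us) / h ^ 2 - (vn - 2 * vc + vs) / h ^ 2 := by
    have hrw : (un - 2 * uc + us) / h ^ 2 - (vn - 2 * vc + vs) / h ^ 2
        = ((un - vn - (uc - vc)) + (us - vs - (uc - vc))) / h ^ 2 := by ring
    rw [hrw]; apply div_nonneg _ (le_of_lt hh2); linarith
  have A1 := lower_sup a1 b1 _ _ h1 hΔX
  have A2 := lower_sup a2 b2 _ _ h2 hΔY
  have A3 := lower_cross bu bl
    ((une + 2 * uc + usw - ue - uw - un - us) / (2 * h ^ 2))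
    ((ue + uw + un + us - use - 2 * uc - unw) / (2 * h ^ 2))
    ((vne + 2 * vc + vsw - ve - vw - vn - vs) / (2 * h ^ 2))
    ((ve + vw + vn + vs - vse - 2 * vc - vnw) / (2 * h ^ 2))
  have hmin3 : 0 ≤ a1 / 2 * ((ue - 2 * uc + uw) / h ^ 2 - (ve - 2 * vc + vw) / h ^ 2)
      + a2 / 2 * ((un - 2 * uc + us) / h ^ 2 - (vn - 2 * vc + vs) / h ^ 2)
      + min (bu * ((une + 2 * uc + usw - ue - uw - un - us) / (2 * h ^ 2)
                  - (vne + 2 * vc + vsw - ve - vw - vn - vs) / (2 * h ^ 2)))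
            (bl * ((ue + uw + un + us - use - 2 * uc - unw) / (2 * h ^ 2)
                  - (ve + vw + vn + vs - vse - 2 * vc - vnw) / (2 * h ^ 2))) := by
    rcases min_cases
        (bu * ((une + 2 * uc + usw - ue - uw - un - us) / (2 * h ^ 2)
              - (vne + 2 * vc + vsw - ve - vw - vn - vs) / (2 * h ^ 2)))
        (bl * ((ue + uw + un + us - use - 2 * uc - unw) / (2 * h ^ 2)
              - (ve + vw + vn + vs - vse - 2 * vc - vnw) / (2 * h ^ 2))) with
      ⟨hm, _⟩ | ⟨hm, _⟩ <;> rw [hm]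
    · have hrw : a1 / 2 * ((ue - 2 * uc + uw) / h ^ 2 - (ve - 2 * vc + vw) / h ^ 2)
          + a2 / 2 * ((un - 2 * uc + us) / h ^ 2 - (vn - 2 * vc + vs) / h ^ 2)
          + bu * ((une + 2 * uc + usw - ue - uw - un - us) / (2 * h ^ 2)
                  - (vne + 2 * vc + vsw - ve - vw - vn - vs) / (2 * h ^ 2))
          = ((a1 - bu) * (ue - ve - (uc - vc)) + (a1 - bu) * (uw - vw - (uc - vc))
            + (a2 - bu) * (un - vn - (uc - vc)) + (a2 - bu) * (us - vs - (uc - vc))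
            + bu * (une - vne - (uc - vc)) + bu * (usw - vsw - (uc - vc))) / (2 * h ^ 2) := by
        field_simp; ring
      rw [hrw]
      apply div_nonneg _ (by positivity)
      have t1 := mul_nonneg (by linarith : (0:ℝ) ≤ a1 - bu) (by linarith : (0:ℝ) ≤ ue - ve - (uc - vc))
      have t2 := mul_nonneg (by linarith : (0:ℝ) ≤ a1 - bu) (by linarith : (0:ℝ) ≤ uw - vw - (uc - vc))
      have t3 := mul_nonneg (by linarith : (0:ℝ) ≤ a2 - bu) (by linarith : (0:ℝ) ≤ un - vn - (uc - vc))
      have t4 := mul_nonneg (by linarith : (0:ℝ) ≤ a2 - bu) (by linarith : (0:ℝ) ≤ us - vs - (uc - vc))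
      have t5 := mul_nonneg (le_of_lt hbu) (by linarith : (0:ℝ) ≤ une - vne - (uc - vc))
      have t6 := mul_nonneg (le_of_lt hbu) (by linarith : (0:ℝ) ≤ usw - vsw - (uc - vc))
      linarith
    · have hrw : a1 / 2 * ((ue - 2 * uc + uw) / h ^ 2 - (ve - 2 * vc + vw) / h ^ 2)
          + a2 / 2 * ((un - 2 * uc + us) / h ^ 2 - (vn - 2 * vc + vs) / h ^ 2)
          + bl * ((ue + uw + un + us - use - 2 * uc - unw) / (2 * h ^ 2)
                  - (ve + vw + vn + vs - vse - 2 * vc - vnw) / (2 * h ^ 2))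
          = ((a1 + bl) * (ue - ve - (uc - vc)) + (a1 + bl) * (uw - vw - (uc - vc))
            + (a2 + bl) * (un - vn - (uc - vc)) + (a2 + bl) * (us - vs - (uc - vc))
            + (-bl) * (use - vse - (uc - vc)) + (-bl) * (unw - vnw - (uc - vc))) / (2 * h ^ 2) := by
        field_simp; ring
      rw [hrw]
      apply div_nonneg _ (by positivity)
      have t1 := mul_nonneg (by linarith : (0:ℝ) ≤ a1 + bl) (by linarith : (0:ℝ) ≤ ue - ve - (uc - vc))
      have t2 := mul_nonneg (by linarith : (0:ℝ) ≤ a1 + bl) (by linarith : (0:ℝ) ≤ uw - vw - (uc - vc))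
      have t3 := mul_nonneg (by linarith : (0:ℝ) ≤ a2 + bl) (by linarith : (0:ℝ) ≤ un - vn - (uc - vc))
      have t4 := mul_nonneg (by linarith : (0:ℝ) ≤ a2 + bl) (by linarith : (0:ℝ) ≤ us - vs - (uc - vc))
      have t5 := mul_nonneg (by linarith : (0:ℝ) ≤ -bl) (by linarith : (0:ℝ) ≤ use - vse - (uc - vc))
      have t6 := mul_nonneg (by linarith : (0:ℝ) ≤ -bl) (by linarith : (0:ℝ) ≤ unw - vnw - (uc - vc))
      linarith
  have hΔne : Δt ≠ 0 := ne_of_gt hΔt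
  have eU' : uc - uo = Δt *
      (max (a1 / 2 * ((ue - 2 * uc + uw) / h ^ 2)) (b1 / 2 * ((ue - 2 * uc + uw) / h ^ 2))
      + max (a2 / 2 * ((un - 2 * uc + us) / h ^ 2)) (b2 / 2 * ((un - 2 * uc + us) / h ^ 2))
      + max (bu * ((une + 2 * uc + usw - ue - uw - un - us) / (2 * h ^ 2)))
            (bl * ((ue + uw + un + us - use - 2 * uc - unw) / (2 * h ^ 2)))) := by
    have h0 : (uc - uo) / Δt
        = max (a1 / 2 * ((ue - 2 * uc + uw) / h ^ 2)) (b1 / 2 * ((ue - 2 * uc + uw) / h ^ 2))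
        + max (a2 / 2 * ((un - 2 * uc + us) / h ^ 2)) (b2 / 2 * ((un - 2 * uc + us) / h ^ 2))
        + max (bu * ((une + 2 * uc + usw - ue - uw - un - us) / (2 * h ^ 2)))
              (bl * ((ue + uw + un + us - use - 2 * uc - unw) / (2 * h ^ 2))) := by linarith
    rw [div_eq_iff hΔne] at h0
    linarith
  have eV' : vc - vo = Δt *
      (max (a1 / 2 * ((ve - 2 * vc + vw) / h ^ 2)) (b1 / 2 * ((ve - 2 * vc + vw) / h ^ 2))
      + max (a2 / 2 * ((vn - 2 * vc + vs) / h ^ 2)) (b2 / 2 * ((vn - 2 * vc + vs) / h ^ 2))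
      + max (bu * ((vne + 2 * vc + vsw - ve - vw - vn - vs) / (2 * h ^ 2)))
            (bl * ((ve + vw + vn + vs - vse - 2 * vc - vnw) / (2 * h ^ 2)))) := by
    have h0 : (vc - vo) / Δt
        = max (a1 / 2 * ((ve - 2 * vc + vw) / h ^ 2)) (b1 / 2 * ((ve - 2 * vc + vw) / h ^ 2))
        + max (a2 / 2 * ((vn - 2 * vc + vs) / h ^ 2)) (b2 / 2 * ((vn - 2 * vc + vs) / h ^ 2))
        + max (bu * ((vne + 2 * vc + vsw - ve - vw - vn - vs) / (2 * h ^ 2)))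
              (bl * ((ve + vw + vn + vs - vse - 2 * vc - vnw) / (2 * h ^ 2))) := by linarith
    rw [div_eq_iff hΔne] at h0
    linarith
  have hdiff : 0 ≤
      (max (a1 / 2 * ((ue - 2 * uc + uw) / h ^ 2)) (b1 / 2 * ((ue - 2 * uc + uw) / h ^ 2))
      + max (a2 / 2 * ((un - 2 * uc + us) / h ^ 2)) (b2 / 2 * ((un - 2 * uc + us) / h ^ 2))
      + max (bu * ((une + 2 * uc + usw - ue - uw - un - us) / (2 * h ^ 2)))
            (bl * ((ue + uw + un + us - use - 2 * uc - unw) / (2 * h ^ 2))))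
      - (max (a1 / 2 * ((ve - 2 * vc + vw) / h ^ 2)) (b1 / 2 * ((ve - 2 * vc + vw) / h ^ 2))
      + max (a2 / 2 * ((vn - 2 * vc + vs) / h ^ 2)) (b2 / 2 * ((vn - 2 * vc + vs) / h ^ 2))
      + max (bu * ((vne + 2 * vc + vsw - ve - vw - vn - vs) / (2 * h ^ 2)))
            (bl * ((ve + vw + vn + vs - vse - 2 * vc - vnw) / (2 * h ^ 2)))) := by
    linarith
  linarith [mul_nonneg (le_of_lt hΔt) hdiff]

/-- Comparison principle: if U and V both solve the implicit scheme, U⁰ ≥ V⁰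
on the grid and U ≥ V on the spatial boundary for all time steps, then
U ≥ V at every grid point and time step. -/
theorem comparison_principle (a1 b1 a2 b2 bl bu Δt h : ℝ) (M N : ℕ)
    (ha1 : 0 < a1) (h1 : a1 ≤ b1) (ha2 : 0 < a2) (h2 : a2 ≤ b2)
    (hbl : bl < 0) (hbu : 0 < bu) (hΔt : 0 < Δt) (hh : 0 < h) (hM : 2 ≤ M)
    (hdd1 : |bu| ≤ a1) (hdd2 : |bu| ≤ a2) (hdd3 : |bl| ≤ a1) (hdd4 : |bl| ≤ a2)
    (U V : ℕ → ℤ → ℤ → ℝ)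
    (hU : ∀ n, n + 1 ≤ N → ∀ i j : ℤ,
      0 < i → i < (M : ℤ) → 0 < j → j < (M : ℤ) →
      gridScheme a1 b1 a2 b2 bl bu Δt h (U (n + 1)) (U n) i j = 0)
    (hV : ∀ n, n + 1 ≤ N → ∀ i j : ℤ,
      0 < i → i < (M : ℤ) → 0 < j → j < (M : ℤ) →
      gridScheme a1 b1 a2 b2 bl bu Δt h (V (n + 1)) (V n) i j = 0)
    (hinit : ∀ i j : ℤ, 0 ≤ i → i ≤ (M : ℤ) → 0 ≤ j → j ≤ (M : ℤ) →
      V 0 i j ≤ U 0 i j)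
    (hbdry : ∀ n, n ≤ N → ∀ i j : ℤ, 0 ≤ i → i ≤ (M : ℤ) → 0 ≤ j → j ≤ (M : ℤ) →
      (i = 0 ∨ i = (M : ℤ) ∨ j = 0 ∨ j = (M : ℤ)) → V n i j ≤ U n i j) :
    ∀ n, n ≤ N → ∀ i j : ℤ, 0 ≤ i → i ≤ (M : ℤ) → 0 ≤ j → j ≤ (M : ℤ) →
      V n i j ≤ U n i j := by
  have dbu1 : bu ≤ a1 := by rwa [abs_of_pos hbu] at hdd1
  have dbu2 : bu ≤ a2 := by rwa [abs_of_pos hbu] at hdd2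
  have dbl1 : -bl ≤ a1 := by rwa [abs_of_neg hbl] at hdd3
  have dbl2 : -bl ≤ a2 := by rwa [abs_of_neg hbl] at hdd4
  intro n
  induction n with
  | zero => intro _ i j hi hiM hj hjM; exact hinit i j hi hiM hj hjM
  | succ n ih =>
    intro hn1 i j hi hiM hj hjM
    have hnN : n ≤ N := by omega
    have hprev := ih hnN
    obtain ⟨p, hp, hmin⟩ := Finset.exists_min_image
      ((Finset.Icc (0:ℤ) (M:ℤ)) ×ˢ (Finset.Icc (0:ℤ) (M:ℤ)))
      (fun p => U (n+1) p.1 p.2 - V (n+1) p.1 p.2)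
      ⟨(0,0), by simp only [Finset.mem_product, Finset.mem_Icc]; omega⟩
    obtain ⟨i0, j0⟩ := p
    simp only [Finset.mem_product, Finset.mem_Icc] at hp
    have hmin' : ∀ a b : ℤ, 0 ≤ a → a ≤ (M:ℤ) → 0 ≤ b → b ≤ (M:ℤ) →
        U (n+1) i0 j0 - V (n+1) i0 j0 ≤ U (n+1) a b - V (n+1) a b := by
      intro a b ha hb hc hd
      exact hmin (a, b) (by simp only [Finset.mem_product, Finset.mem_Icc]; omega)
    have key : 0 ≤ U (n+1) i0 j0 - V (n+1) i0 j0 := by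
      by_cases hb : i0 = 0 ∨ i0 = (M:ℤ) ∨ j0 = 0 ∨ j0 = (M:ℤ)
      · have := hbdry (n+1) hn1 i0 j0 hp.1.1 hp.1.2 hp.2.1 hp.2.2 hb
        linarith
      · push_neg at hb
        have hi0 : 0 < i0 := by omega
        have hi0M : i0 < (M:ℤ) := by omega
        have hj0 : 0 < j0 := by omega
        have hj0M : j0 < (M:ℤ) := by omega
        have eU := hU n hn1 i0 j0 hi0 hi0M hj0 hj0M
        have eV := hV n hn1 i0 j0 hi0 hi0M hj0 hj0M
        unfold gridScheme at eU eV
        rw [ssup_linear a1 b1 _ h1, ssup_linear a2 b2 _ h2] at eU eV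
        have hold := hprev i0 j0 (by omega) (by omega) (by omega) (by omega)
        have hres := interior_key a1 b1 a2 b2 bl bu Δt h
          (U (n+1) i0 j0) (U (n+1) (i0+1) j0) (U (n+1) (i0-1) j0)
          (U (n+1) i0 (j0+1)) (U (n+1) i0 (j0-1))
          (U (n+1) (i0+1) (j0+1)) (U (n+1) (i0-1) (j0-1))
          (U (n+1) (i0+1) (j0-1)) (U (n+1) (i0-1) (j0+1)) (U n i0 j0)
          (V (n+1) i0 j0) (V (n+1) (i0+1) j0) (V (n+1) (i0-1) j0)
          (V (n+1) i0 (j0+1)) (V (n+1) i0 (j0-1))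
          (V (n+1) (i0+1) (j0+1)) (V (n+1) (i0-1) (j0-1))
          (V (n+1) (i0+1) (j0-1)) (V (n+1) (i0-1) (j0+1)) (V n i0 j0)
          hΔt hh ha1 h1 ha2 h2 hbl hbu dbu1 dbu2 dbl1 dbl2 hold
          (hmin' (i0+1) j0 (by omega) (by omega) (by omega) (by omega))
          (hmin' (i0-1) j0 (by omega) (by omega) (by omega) (by omega))
          (hmin' i0 (j0+1) (by omega) (by omega) (by omega) (by omega))
          (hmin' i0 (j0-1) (by omega) (by omega) (by omega) (by omega))
          (hmin' (i0+1) (j0+1) (by omega) (by omega) (by omega) (by omega))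
          (hmin' (i0-1) (j0-1) (by omega) (by omega) (by omega) (by omega))
          (hmin' (i0+1) (j0-1) (by omega) (by omega) (by omega) (by omega))
          (hmin' (i0-1) (j0+1) (by omega) (by omega) (by omega) (by omega))
          eU eV
        linarith
    have := hmin' i j hi hiM hj hjM
    linarith
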